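/- Let n ≥ 1 and let I be the ideal of the polynomial ring ℤ[x₁, x₂] generated by x₁^{2n} − 1 and x₂² − x₁x₂ − x₂. Then the quotient ring ℤ[x₁, x₂]/I is a free ℤ-module of rank 4n, and the images of the 4n monomials x₁^i (0 ≤ i ≤ 2n−1) and x₁^i x₂ (0 ≤ i ≤ 2n−1) form a ℤ-basis of it. -/

import Mathlib

open MvPolynomial

/-- The ideal `I = (x₁^{2n} - 1, x₂² - x₁x₂ - x₂)` of `ℤ[x₁, x₂]`. -/
noncomputable def greenIdeal (n : ℕ) : Ideal (MvPolynomial (Fin 2) ℤ) :=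
  Ideal.span {(X 0 : MvPolynomial (Fin 2) ℤ) ^ (2 * n) - 1,
    (X 1 : MvPolynomial (Fin 2) ℤ) ^ 2 - X 0 * X 1 - X 1}

/-!
The quotient `ℤ[x₁, x₂]/(x₁^{2n} - 1, x₂² - x₁x₂ - x₂)` is the tower obtained by adjoining to `ℤ`
a root `θ` of `X^{2n} - 1`, and then to `A = ℤ[θ]` a root `η` of `Y² - (θ + 1)Y`, with `x₁ ↦ θ`,
`x₂ ↦ η`. Both polynomials are monic, so `A` has the `ℤ`-power basis `1, θ, …, θ^{2n-1}` and `A[η]`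
has the `A`-power basis `1, η`; the products `θ^i η^j` then form a `ℤ`-basis of the tower.
-/

open scoped Polynomial

theorem Ideal.Quotient.mk_span_pair_left {A : Type*} [CommRing A] (a b : A) :
    Ideal.Quotient.mk (Ideal.span {a, b}) a = 0 :=
  Ideal.Quotient.eq_zero_iff_mem.2 (Ideal.subset_span (by simp))

theorem Ideal.Quotient.mk_span_pair_right {A : Type*} [CommRing A] (a b : A) :
    Ideal.Quotient.mk (Ideal.span {a, b}) b = 0 :=
  Ideal.Quotient.eq_zero_iff_mem.2 (Ideal.subset_span (by simp))

namespace AdjoinRoot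

variable {R : Type*} [CommRing R] {f : R[X]} {g : (AdjoinRoot f)[X]}

section Tower

variable {m k : ℕ} (hf : f.Monic) (hg : g.Monic) (hm : f.natDegree = m) (hk : g.natDegree = k)

noncomputable def towerBasis : Module.Basis (Fin m × Fin k) R (AdjoinRoot g) :=
  ((powerBasis' hf).basis.smulTower (powerBasis' hg).basis).reindex
    ((finCongr ((powerBasis'_dim hf).trans hm)).prodCongr
      (finCongr ((powerBasis'_dim hg).trans hk)))

theorem towerBasis_apply (p : Fin m × Fin k) :
    towerBasis hf hg hm hk p = of g (root f ^ (p.1 : ℕ)) * root g ^ (p.2 : ℕ) := by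
  simp [towerBasis, Algebra.smul_def]

end Tower

section TwoVariables

variable {F G : MvPolynomial (Fin 2) R} (hF : Polynomial.aeval (X 0) f = F)
  (hG : aeval ![Polynomial.C (root f), Polynomial.X] G = g)

noncomputable def quotientSpanToAdjoinRoot :
    MvPolynomial (Fin 2) R ⧸ Ideal.span {F, G} →ₐ[R] AdjoinRoot g :=
  Ideal.Quotient.liftₐ _ (aeval ![of g (root f), root g]) <| by
    suffices Ideal.span {F, G} ≤ RingHom.ker (aeval ![of g (root f), root g]) from
      fun a ha => this ha
    rw [Ideal.span_le, Set.insert_subset_iff, Set.singleton_subset_iff]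
    constructor
    · rw [SetLike.mem_coe, RingHom.mem_ker, ← hF, ← Polynomial.aeval_algHom_apply, aeval_X]
      simpa [aeval_eq] using Polynomial.aeval_algHom_apply (ofAlgHom R g) (root f) f
    · have hcomp : ((Polynomial.aeval (root g)).restrictScalars R).comp
          (aeval ![Polynomial.C (root f), Polynomial.X]) = aeval ![of g (root f), root g] := by
        rw [comp_aeval]
        congr 1
        funext i
        fin_cases i <;> simp [algebraMap_eq]
      rw [SetLike.mem_coe, RingHom.mem_ker, ← hcomp]
      simp [hG, aeval_eq]

@[simp]
theorem quotientSpanToAdjoinRoot_mk (p : MvPolynomial (Fin 2) R) :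
    quotientSpanToAdjoinRoot hF hG (Ideal.Quotient.mk _ p) = aeval ![of g (root f), root g] p :=
  rfl

noncomputable def baseToQuotientSpan :
    AdjoinRoot f →ₐ[R] MvPolynomial (Fin 2) R ⧸ Ideal.span {F, G} :=
  liftAlgHom f (Algebra.ofId R _) (Ideal.Quotient.mk _ (X 0)) <| by
    change Polynomial.aeval (Ideal.Quotient.mk _ (X 0)) f = 0
    rw [← Ideal.Quotient.mkₐ_eq_mk R, Polynomial.aeval_algHom_apply, hF,
      Ideal.Quotient.mkₐ_eq_mk, Ideal.Quotient.mk_span_pair_left]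

@[simp]
theorem baseToQuotientSpan_root :
    baseToQuotientSpan (G := G) hF (root f) = Ideal.Quotient.mk _ (X 0) :=
  liftAlgHom_root _ _ _ _

noncomputable def adjoinRootToQuotientSpan :
    AdjoinRoot g →ₐ[R] MvPolynomial (Fin 2) R ⧸ Ideal.span {F, G} :=
  liftAlgHom g (baseToQuotientSpan hF) (Ideal.Quotient.mk _ (X 1)) <| by
    have hcomp : (Polynomial.eval₂RingHom (baseToQuotientSpan hF).toRingHom
        (Ideal.Quotient.mk _ (X 1))).comp (aeval ![Polynomial.C (root f), Polynomial.X]).toRingHom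
        = Ideal.Quotient.mk (Ideal.span {F, G}) := by
      apply MvPolynomial.ringHom_ext
      · intro r
        simp only [RingHom.comp_apply, AlgHom.toRingHom_eq_coe, RingHom.coe_coe, algHom_C,
          Polynomial.coe_eval₂RingHom, Polynomial.algebraMap_apply, Polynomial.eval₂_C,
          AlgHom.commutes]
        rfl
      · intro i
        fin_cases i <;> simp
    rw [← Ideal.Quotient.mk_span_pair_right F G, ← hG]
    exact RingHom.congr_fun hcomp G

@[simp]
theorem adjoinRootToQuotientSpan_of_root :
    adjoinRootToQuotientSpan hF hG (of g (root f)) = Ideal.Quotient.mk _ (X 0) := by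
  simp [adjoinRootToQuotientSpan]

@[simp]
theorem adjoinRootToQuotientSpan_root :
    adjoinRootToQuotientSpan hF hG (root g) = Ideal.Quotient.mk _ (X 1) :=
  liftAlgHom_root _ _ _ _

noncomputable def adjoinRootEquivQuotientSpan :
    AdjoinRoot g ≃ₐ[R] MvPolynomial (Fin 2) R ⧸ Ideal.span {F, G} :=
  AlgEquiv.ofAlgHom (adjoinRootToQuotientSpan hF hG) (quotientSpanToAdjoinRoot hF hG)
    (Ideal.Quotient.algHom_ext R <| MvPolynomial.algHom_ext fun i => by fin_cases i <;> simp)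
    (algHom_ext' (algHom_ext (by simp)) (by simp))

variable {m k : ℕ} (hf : f.Monic) (hg : g.Monic) (hm : f.natDegree = m) (hk : g.natDegree = k)

noncomputable def quotientSpanBasis :
    Module.Basis (Fin m × Fin k) R (MvPolynomial (Fin 2) R ⧸ Ideal.span {F, G}) :=
  (towerBasis hf hg hm hk).map (adjoinRootEquivQuotientSpan hF hG).toLinearEquiv

theorem quotientSpanBasis_apply (p : Fin m × Fin k) :
    quotientSpanBasis hF hG hf hg hm hk p =
      Ideal.Quotient.mk _ (X 0 ^ (p.1 : ℕ) * X 1 ^ (p.2 : ℕ)) := by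
  simp [quotientSpanBasis, towerBasis_apply, adjoinRootEquivQuotientSpan]

end TwoVariables

end AdjoinRoot

section GreenRing

open AdjoinRoot

variable (n : ℕ)

noncomputable def greenRelation₁ : ℤ[X] := Polynomial.X ^ (2 * n) - 1

noncomputable def greenRelation₂ : (AdjoinRoot (greenRelation₁ n))[X] :=
  Polynomial.X ^ 2 - Polynomial.C (root (greenRelation₁ n)) * Polynomial.X - Polynomial.X

variable {n}

theorem greenRelation₁_monic (hn : 1 ≤ n) : (greenRelation₁ n).Monic :=
  Polynomial.monic_X_pow_sub_C 1 (by omega)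

theorem greenRelation₁_natDegree : (greenRelation₁ n).natDegree = 2 * n := by
  simpa [greenRelation₁] using Polynomial.natDegree_X_pow_sub_C (n := 2 * n) (r := (1 : ℤ))

instance : Nontrivial (AdjoinRoot (greenRelation₁ n)) :=
  (lift (RingHom.id ℤ) 1 (by simp [greenRelation₁])).domain_nontrivial

theorem greenRelation₂_monic : (greenRelation₂ n).Monic := by
  rw [greenRelation₂]; monicity!

theorem greenRelation₂_natDegree : (greenRelation₂ n).natDegree = 2 := by
  rw [greenRelation₂]; compute_degree!

theorem aeval_greenRelation₁ : Polynomial.aeval (X 0) (greenRelation₁ n) =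
    (X 0 : MvPolynomial (Fin 2) ℤ) ^ (2 * n) - 1 := by
  simp [greenRelation₁]

theorem aeval_greenRelation₂ : aeval ![Polynomial.C (root (greenRelation₁ n)), Polynomial.X]
    ((X 1 : MvPolynomial (Fin 2) ℤ) ^ 2 - X 0 * X 1 - X 1) = greenRelation₂ n := by
  simp [greenRelation₂]

end GreenRing

/-- `ℤ[x₁,x₂]/I` is a free `ℤ`-module of rank `4n`, and the images of the
monomials `x₁^i` and `x₁^i x₂` (`0 ≤ i ≤ 2n - 1`) form a `ℤ`-basis of it. -/
theorem stmt_7 (n : ℕ) (hn : 1 ≤ n) :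
    Module.Free ℤ (MvPolynomial (Fin 2) ℤ ⧸ greenIdeal n) ∧
    Module.rank ℤ (MvPolynomial (Fin 2) ℤ ⧸ greenIdeal n) = 4 * n ∧
    ∃ B : Module.Basis (Fin (2 * n) × Fin 2) ℤ (MvPolynomial (Fin 2) ℤ ⧸ greenIdeal n),
      ∀ p, B p = Ideal.Quotient.mk (greenIdeal n)
        ((X 0 : MvPolynomial (Fin 2) ℤ) ^ (p.1 : ℕ) * (X 1 : MvPolynomial (Fin 2) ℤ) ^ (p.2 : ℕ)) := by
  let B : Module.Basis (Fin (2 * n) × Fin 2) ℤ (MvPolynomial (Fin 2) ℤ ⧸ greenIdeal n) :=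
    AdjoinRoot.quotientSpanBasis aeval_greenRelation₁ aeval_greenRelation₂
      (greenRelation₁_monic hn) greenRelation₂_monic greenRelation₁_natDegree
      greenRelation₂_natDegree
  refine ⟨.of_basis B, ?_, B, fun p => AdjoinRoot.quotientSpanBasis_apply _ _ _ _ _ _ p⟩
  rw [rank_eq_card_basis B, Fintype.card_prod, Fintype.card_fin, Fintype.card_fin]
  push_cast
  ring
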